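/- If G is the vertex-sum of t ≥ 2 copies of the complete graph K_n (n ≥ 3) at a vertex, then D(G) = min{ k : C(k, n-1) ≥ t }, where C(k, n-1) is the binomial coefficient. -/

import Mathlib

open Function

section Defs

universe u₁ u₂ u₃

variable {V : Type u₁} {W : Type u₂} {C : Type u₃}

/-- A coloring is distinguishing if only the identity automorphism preserves it. -/
def DistCol (G : SimpleGraph V) (c : V → C) : Prop :=
  ∀ φ : G ≃g G, (∀ x, c (φ x) = c x) → ∀ x, φ x = x

/-- The distinguishing number: the least number of colors admitting a distinguishing coloring. -/
noncomputable def Dnum (G : SimpleGraph V) : ℕ :=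
  sInf {k | ∃ c : V → Fin k, DistCol G c}

/-- The distinguishing threshold: the least `k` such that every `k`-coloring is distinguishing. -/
noncomputable def theta (G : SimpleGraph V) : ℕ :=
  sInf {k | ∀ c : V → Fin k, DistCol G c}

/-- The number of non-equivalent distinguishing colorings with at most `k` colors. -/
noncomputable def Phi (G : SimpleGraph V) (k : ℕ) : ℕ :=
  Nat.card (Quot fun c₁ c₂ : {c : V → Fin k // DistCol G c} =>
    ∃ φ : G ≃g G, ∀ x, c₁.1 x = c₂.1 (φ x))

/-- Rooted version of distinguishing: only automorphisms fixing `v` are considered. -/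
def DistColR (G : SimpleGraph V) (v : V) (c : V → C) : Prop :=
  ∀ φ : G ≃g G, φ v = v → (∀ x, c (φ x) = c x) → ∀ x, φ x = x

noncomputable def DnumR (G : SimpleGraph V) (v : V) : ℕ :=
  sInf {k | ∃ c : V → Fin k, DistColR G v c}

noncomputable def thetaR (G : SimpleGraph V) (v : V) : ℕ :=
  sInf {k | ∀ c : V → Fin k, DistColR G v c}

noncomputable def PhiR (G : SimpleGraph V) (v : V) (k : ℕ) : ℕ :=
  Nat.card (Quot fun c₁ c₂ : {c : V → Fin k // DistColR G v c} =>
    ∃ φ : G ≃g G, φ v = v ∧ ∀ x, c₁.1 x = c₂.1 (φ x))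

/-- A vertex `u` is steady if every automorphism of `G - u` extends to an
automorphism of `G` fixing `u`. -/
def Steady (G : SimpleGraph V) (u : V) : Prop :=
  ∀ ψ : G.induce {w : V | w ≠ u} ≃g G.induce {w : V | w ≠ u},
    ∃ φ : G ≃g G, φ u = u ∧ ∀ w : {w : V | w ≠ u}, φ ↑w = ↑(ψ w)

/-- The vertex-sum of the graphs `G i` (all containing the vertex `u`) at `u`:
`none` is the central vertex obtained by identifying the copies of `u`. -/
def VertexSum {t : ℕ} (G : Fin t → SimpleGraph V) (u : V) :
    SimpleGraph (Option (Fin t × {w : V // w ≠ u})) where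
  Adj x y :=
    (∃ i w, x = none ∧ y = some (i, w) ∧ (G i).Adj u w.1) ∨
    (∃ i w, y = none ∧ x = some (i, w) ∧ (G i).Adj u w.1) ∨
    (∃ i w z, x = some (i, w) ∧ y = some (i, z) ∧ (G i).Adj w.1 z.1)
  symm := by
    constructor
    rintro x y (⟨i, w, hx, hy, h⟩ | ⟨i, w, hy, hx, h⟩ | ⟨i, w, z, hx, hy, h⟩)
    · exact Or.inr (Or.inl ⟨i, w, hx, hy, h⟩)
    · exact Or.inl ⟨i, w, hy, hx, h⟩
    · exact Or.inr (Or.inr ⟨i, z, w, hy, hx, h.symm⟩)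
  loopless := by
    constructor
    rintro x (⟨i, w, hx, hy, h⟩ | ⟨i, w, hy, hx, h⟩ | ⟨i, w, z, hx, hy, h⟩)
    · rw [hx] at hy; exact absurd hy (by simp)
    · rw [hy] at hx; exact absurd hx.symm (by simp)
    · rw [hx] at hy
      obtain rfl : w = z := by simpa using hy
      exact h.ne rfl

/-- Disjoint union of the graphs `H i`. -/
def SigmaUnion {t : ℕ} (H : Fin t → SimpleGraph W) : SimpleGraph (Fin t × W) where
  Adj x y := x.1 = y.1 ∧ (H x.1).Adj x.2 y.2
  symm := by
    constructor
    rintro ⟨i, a⟩ ⟨j, b⟩ ⟨rfl, h⟩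
    exact ⟨rfl, h.symm⟩
  loopless := by constructor; rintro x ⟨-, h⟩; exact h.ne rfl

/-- A graph is 2-connected if it has at least 3 vertices and no cut vertex. -/
def TwoConnected (G : SimpleGraph V) [Fintype V] : Prop :=
  3 ≤ Fintype.card V ∧ ∀ x : V, (G.induce {w : V | w ≠ x}).Connected

/-- The smooth rooted product `G_s(H)` where `H` is rooted at `v`. -/
def RootedProd (G : SimpleGraph V) (H : SimpleGraph W) (v : W) :
    SimpleGraph (V × W) where
  Adj x y := (x.1 = y.1 ∧ H.Adj x.2 y.2) ∨ (x.2 = v ∧ y.2 = v ∧ G.Adj x.1 y.1)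
  symm := by
    constructor
    rintro x y (⟨h1, h2⟩ | ⟨h1, h2, h3⟩)
    · exact Or.inl ⟨h1.symm, h2.symm⟩
    · exact Or.inr ⟨h2, h1, h3.symm⟩
  loopless := by constructor; rintro x (⟨-, h⟩ | ⟨-, -, h⟩) <;> exact h.ne rfl

/-- The corona product `G ⊙ H`: the vertex `(g, none)` is the vertex `g` of `G`,
and `(g, some h)` is the vertex `h` in the copy of `H` attached to `g`. -/
def Corona (G : SimpleGraph V) (H : SimpleGraph W) :
    SimpleGraph (V × Option W) where
  Adj x y :=
    (x.2 = none ∧ y.2 = none ∧ G.Adj x.1 y.1) ∨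
    (x.1 = y.1 ∧ ∃ a b, x.2 = some a ∧ y.2 = some b ∧ H.Adj a b) ∨
    (x.1 = y.1 ∧ x.2 = none ∧ ∃ a, y.2 = some a) ∨
    (x.1 = y.1 ∧ y.2 = none ∧ ∃ a, x.2 = some a)
  symm := by
    constructor
    rintro x y (⟨h1, h2, h3⟩ | ⟨h1, a, b, h2, h3, h4⟩ | ⟨h1, h2, h3⟩ | ⟨h1, h2, h3⟩)
    · exact Or.inl ⟨h2, h1, h3.symm⟩
    · exact Or.inr (Or.inl ⟨h1.symm, b, a, h3, h2, h4.symm⟩)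
    · exact Or.inr (Or.inr (Or.inr ⟨h1.symm, h2, h3⟩))
    · exact Or.inr (Or.inr (Or.inl ⟨h1.symm, h2, h3⟩))
  loopless := by
    constructor
    rintro x (⟨-, -, h⟩ | ⟨-, a, b, h2, h3, h4⟩ | ⟨-, h2, a, h3⟩ | ⟨-, h2, a, h3⟩)
    · exact h.ne rfl
    · rw [h2] at h3; exact h4.ne (Option.some.inj h3)
    · rw [h2] at h3; exact absurd h3 (by simp)
    · rw [h2] at h3; exact absurd h3 (by simp)

/-- The lexicographic product `G ∘ H`. -/
def LexProd (G : SimpleGraph V) (H : SimpleGraph W) : SimpleGraph (V × W) where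
  Adj x y := G.Adj x.1 y.1 ∨ (x.1 = y.1 ∧ H.Adj x.2 y.2)
  symm := by
    constructor
    rintro x y (h | ⟨h1, h2⟩)
    exacts [Or.inl h.symm, Or.inr ⟨h1.symm, h2.symm⟩]
  loopless := by constructor; rintro x (h | ⟨-, h⟩) <;> exact h.ne rfl

/-- The number of cycles (orbits, counting fixed points) of a permutation. -/
noncomputable def numCycles (e : Equiv.Perm V) : ℕ :=
  Nat.card (Quot fun x y : V => ∃ n : ℤ, (e ^ n) x = y)

end Defs

/-! The hub `none` is the only vertex adjacent to all others (as `t ≥ 2`), so every automorphism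
fixes it and carries each clique onto a clique. Hence a colouring is distinguishing exactly when it
is injective on each clique and different cliques receive different colour sets: otherwise a
transposition inside a clique, or an exchange of two cliques, preserves it. With `k` colours this
asks for `t` distinct `(n - 1)`-subsets of the colours, i.e. `t ≤ C(k, n - 1)`. -/

lemma exists_perm_comp_eq_of_range_eq {α β : Type*} {f g : α → β} (hf : Injective f)
    (hg : Injective g) (h : Set.range f = Set.range g) :
    ∃ p : Equiv.Perm α, ∀ a, g (p a) = f a :=
  ⟨(Equiv.ofInjective f hf).trans ((Equiv.setCongr h).trans (Equiv.ofInjective g hg).symm),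
    fun _ => Equiv.apply_ofInjective_symm hg _⟩

abbrev windmill (V : Type*) (t : ℕ) (u : V) :
    SimpleGraph (Option (Fin t × {w : V // w ≠ u})) :=
  VertexSum (fun _ : Fin t => (⊤ : SimpleGraph V)) u

namespace windmill

variable {V C : Type*} {t : ℕ} {u : V}

@[simp] lemma adj_none_some (i : Fin t) (w : {w : V // w ≠ u}) :
    (windmill V t u).Adj none (some (i, w)) :=
  Or.inl ⟨i, w, rfl, rfl, Ne.symm w.2⟩

@[simp] lemma adj_some_none (i : Fin t) (w : {w : V // w ≠ u}) :
    (windmill V t u).Adj (some (i, w)) none :=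
  (adj_none_some i w).symm

@[simp] lemma adj_some_some {i j : Fin t} {w z : {w : V // w ≠ u}} :
    (windmill V t u).Adj (some (i, w)) (some (j, z)) ↔ i = j ∧ w ≠ z := by
  have := w.2
  have := z.2
  simp [windmill, VertexSum, Subtype.ext_iff]
  grind

def shearIso (σ : Equiv.Perm (Fin t)) (π : Fin t → Equiv.Perm {w : V // w ≠ u}) :
    windmill V t u ≃g windmill V t u where
  toEquiv := (Equiv.prodShear σ π).optionCongr
  map_rel_iff' := by
    rintro (_ | ⟨i, w⟩) (_ | ⟨j, z⟩) <;> simp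
    rintro rfl
    exact (π i).injective.ne_iff

@[simp] lemma shearIso_some (σ : Equiv.Perm (Fin t)) (π : Fin t → Equiv.Perm {w : V // w ≠ u})
    (i : Fin t) (w : {w : V // w ≠ u}) :
    shearIso σ π (some (i, w)) = some (σ i, π i w) := rfl

variable {c : Option (Fin t × {w : V // w ≠ u}) → C}

lemma injective_copy_of_distCol (hc : DistCol (windmill V t u) c) (i : Fin t) :
    Injective fun w => c (some (i, w)) := by
  classical
  intro w w' hcol
  let π : Fin t → Equiv.Perm {w : V // w ≠ u} := fun l => if l = i then Equiv.swap w w' else 1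
  have hpres : ∀ x, c (shearIso 1 π x) = c x := by
    rintro (_ | ⟨l, z⟩)
    · rfl
    · by_cases hl : l = i
      · subst hl
        simp only [shearIso_some, π, ↓reduceIte, Equiv.Perm.one_apply]
        rw [Equiv.swap_apply_def]
        split_ifs with h₁ h₂ <;> simp_all
      · simp [π, hl]
  simpa [π, eq_comm] using hc _ hpres (some (i, w))

lemma injective_range_copy_of_distCol [Nontrivial V] (hc : DistCol (windmill V t u) c) :
    Injective fun i => Set.range fun w => c (some (i, w)) := by
  intro i j hij
  by_contra hne
  obtain ⟨p, hp⟩ := exists_perm_comp_eq_of_range_eq (injective_copy_of_distCol hc i)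
    (injective_copy_of_distCol hc j) hij
  let π : Fin t → Equiv.Perm {w : V // w ≠ u} := fun l =>
    if l = i then p else if l = j then p⁻¹ else 1
  have hpres : ∀ x, c (shearIso (Equiv.swap i j) π x) = c x := by
    rintro (_ | ⟨l, z⟩)
    · rfl
    · rw [shearIso_some, Equiv.swap_apply_def]
      split_ifs with h₁ h₂
      · subst h₁; simp [π, hp]
      · subst h₂; simpa [π, Ne.symm hne] using (hp (p⁻¹ z)).symm
      · simp [π, h₁, h₂]
  obtain ⟨v, hv⟩ := exists_ne u
  have := congr_arg (Option.map Prod.fst) (hc _ hpres (some (i, ⟨v, hv⟩)))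
  simp only [shearIso_some, Option.map_some, Equiv.swap_apply_left, Option.some.injEq] at this
  exact hne this.symm

lemma card_le_choose_of_distCol [Fintype V] [DecidableEq V] [Nontrivial V] [Fintype C]
    (hc : DistCol (windmill V t u) c) : t ≤ (Fintype.card C).choose (Fintype.card V - 1) := by
  classical
  let colors : Fin t → Finset C := fun i => (Set.range fun w => c (some (i, w))).toFinset
  have hcolors : ∀ i, colors i ∈ Finset.powersetCard (Fintype.card V - 1) Finset.univ := by
    intro i
    rw [Finset.mem_powersetCard, Set.toFinset_card, Set.card_range_of_injective
      (injective_copy_of_distCol hc i)]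
    exact ⟨Finset.subset_univ _, Set.card_ne_eq u⟩
  simpa using Finset.card_le_card_of_injOn (s := Finset.univ) colors (fun i _ => hcolors i)
    (fun i _ j _ hij => injective_range_copy_of_distCol hc (Set.toFinset_inj.mp hij))

lemma adj_none {y : Option (Fin t × {w : V // w ≠ u})} (hy : y ≠ none) :
    (windmill V t u).Adj none y := by
  obtain ⟨⟨i, w⟩, rfl⟩ := Option.ne_none_iff_exists'.mp hy
  exact adj_none_some i w

lemma eq_none_of_forall_adj [Nontrivial V] (ht : 2 ≤ t) {x : Option (Fin t × {w : V // w ≠ u})}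
    (hx : ∀ y, y ≠ x → (windmill V t u).Adj x y) : x = none := by
  have : Nontrivial (Fin t) := Fin.nontrivial_iff_two_le.mpr ht
  obtain _ | ⟨i, w⟩ := x
  · rfl
  obtain ⟨j, hj⟩ := exists_ne i
  obtain ⟨v, hv⟩ := exists_ne u
  have := hx (some (j, ⟨v, hv⟩)) (by simp [hj])
  exact absurd (adj_some_some.mp this).1 hj.symm

lemma map_none [Nontrivial V] (ht : 2 ≤ t) (φ : windmill V t u ≃g windmill V t u) :
    φ none = none := by
  refine eq_none_of_forall_adj ht fun y hy => ?_
  rw [← φ.apply_symm_apply y]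
  exact φ.map_adj_iff.mpr (adj_none fun h => hy (by rw [← h, φ.apply_symm_apply]))

lemma map_some_ne_none {φ : windmill V t u ≃g windmill V t u} (hφ : φ none = none)
    (p : Fin t × {w : V // w ≠ u}) : φ (some p) ≠ none := by
  rw [← hφ]
  exact φ.injective.ne (Option.some_ne_none p)

lemma exists_map_some_of_map_some {φ : windmill V t u ≃g windmill V t u} (hφ : φ none = none)
    {i j : Fin t} {w z : {w : V // w ≠ u}} (h : φ (some (i, w)) = some (j, z))
    (w' : {w : V // w ≠ u}) : ∃ z', φ (some (i, w')) = some (j, z') := by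
  obtain ⟨⟨j', z'⟩, h'⟩ := Option.ne_none_iff_exists'.mp (map_some_ne_none hφ (i, w'))
  rcases eq_or_ne w w' with rfl | hne
  · exact ⟨z, h⟩
  have hadj : (windmill V t u).Adj (φ (some (i, w))) (φ (some (i, w'))) :=
    φ.map_adj_iff.mpr (adj_some_some.mpr ⟨rfl, hne⟩)
  rw [h, h', adj_some_some] at hadj
  exact ⟨z', hadj.1 ▸ h'⟩

lemma distCol_of_injective [Nontrivial V] (ht : 2 ≤ t) (c₀ : C)
    {f : Fin t → {w : V // w ≠ u} → C} (hf : ∀ i, Injective (f i))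
    (hr : Injective fun i => Set.range (f i)) :
    DistCol (windmill V t u) fun x => x.elim c₀ fun p => f p.1 p.2 := by
  set c : Option (Fin t × {w : V // w ≠ u}) → C := fun x => x.elim c₀ fun p => f p.1 p.2
  have range_subset : ∀ ψ : windmill V t u ≃g windmill V t u, (∀ x, c (ψ x) = c x) →
      ∀ {i j w z}, ψ (some (i, w)) = some (j, z) → Set.range (f i) ⊆ Set.range (f j) := by
    rintro ψ hψ i j w z h _ ⟨w', rfl⟩
    obtain ⟨z', hz'⟩ := exists_map_some_of_map_some (map_none ht ψ) h w'
    exact ⟨z', by simpa [c, hz'] using hψ (some (i, w'))⟩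
  intro φ hφ
  have hφ' : ∀ x, c (φ.symm x) = c x := fun x => by
    simpa using (hφ (φ.symm x)).symm
  rintro (_ | ⟨i, w⟩)
  · exact map_none ht φ
  obtain ⟨⟨j, z⟩, h⟩ :=
    Option.ne_none_iff_exists'.mp (map_some_ne_none (map_none ht φ) (i, w))
  obtain rfl : i = j := hr ((range_subset φ hφ h).antisymm
    (range_subset φ.symm hφ' (φ.symm_apply_eq.mpr h.symm)))
  have hcol : f i z = f i w := by simpa [c, h] using hφ (some (i, w))
  rw [h, hf i hcol]

lemma exists_distCol_of_le_choose [Fintype V] [DecidableEq V] [Nontrivial V] (ht : 2 ≤ t)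
    {k : ℕ} (hk : t ≤ k.choose (Fintype.card V - 1)) :
    ∃ c : Option (Fin t × {w : V // w ≠ u}) → Fin k, DistCol (windmill V t u) c := by
  have hk0 : 0 < k := by
    refine Nat.pos_of_ne_zero fun h => ?_
    have : 1 < Fintype.card V := Fintype.one_lt_card
    rw [h, Nat.choose_eq_zero_of_lt (by omega)] at hk
    omega
  obtain ⟨A⟩ := Function.Embedding.nonempty_of_card_le (α := Fin t)
    (β := Finset.powersetCard (Fintype.card V - 1) (Finset.univ : Finset (Fin k))) (by simpa)
  have hA : ∀ i, Fintype.card {w : V // w ≠ u} = Fintype.card (A i : Finset (Fin k)) := by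
    intro i
    rw [Fintype.card_coe, (Finset.mem_powersetCard.mp (A i).2).2]
    exact Set.card_ne_eq u
  let g i : {w : V // w ≠ u} ≃ (A i : Finset (Fin k)) := Fintype.equivOfCardEq (hA i)
  have hrange : ∀ i, Set.range (fun w => (g i w : Fin k)) = (A i : Finset (Fin k)) := fun i =>
    (EquivLike.range_comp Subtype.val (g i)).trans Subtype.range_coe
  refine ⟨_, distCol_of_injective ht (⟨0, hk0⟩ : Fin k) (f := fun i w => g i w)
    (fun i => Subtype.val_injective.comp (g i).injective) fun i j hij => A.injective ?_⟩
  exact Subtype.ext (Finset.coe_injective ((hrange i).symm.trans (hij.trans (hrange j))))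

end windmill

/-- the distinguishing number of the vertex-sum of `t ≥ 2` copies of `K n`
(`n ≥ 3`) at a vertex is `min { k : C(k, n-1) ≥ t }`. -/
theorem stmt7 (n t : ℕ) (hn : 3 ≤ n) (ht : 2 ≤ t) (u : Fin n) :
    Dnum (VertexSum (fun _ : Fin t => (⊤ : SimpleGraph (Fin n))) u) =
      sInf {k | t ≤ k.choose (n - 1)} := by
  have : Nontrivial (Fin n) := Fin.nontrivial_iff_two_le.mpr (by omega)
  unfold Dnum
  congr 1
  ext k
  constructor
  · rintro ⟨c, hc⟩
    simpa using windmill.card_le_choose_of_distCol hc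
  · intro hk
    exact windmill.exists_distCol_of_le_choose ht (by simpa using hk)
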